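/- Let θ ∈ ℝ with cos θ > 0, let T ∈ GL(2,ℝ) be the rotation by angle θ, and let a ∈ ℝ² satisfy |sin θ| ≤ ‖a‖ < 1. Then the map T̄ₐ(x) = (a+T(x))/‖a+T(x)‖ on S¹ has a fixed point. -/

import Mathlib

/-!
Identify `ℝ²` with `ℂ`, so that the rotation becomes multiplication by `ζ = cos θ + i sin θ`
and `a` becomes `z`. A unit `x` is fixed as soon as `z + ζ x = L x` for some `L > 0`, i.e.
`x = z / (L - ζ)`, which has norm one exactly when `|L - ζ| = |z|`. Since
`|L - ζ|² = (L - cos θ)² + sin² θ`, the choice `L = cos θ + √(|z|² - sin² θ)` works, and it is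
positive because `cos θ > 0`.
-/

/-- The "affine" map `x ↦ (a + T(x))/‖a + T(x)‖` induced on the unit sphere. -/
noncomputable def affAct {m : ℕ} (A : Matrix (Fin m) (Fin m) ℝ)
    (a x : EuclideanSpace ℝ (Fin m)) : EuclideanSpace ℝ (Fin m) :=
  ‖a + Matrix.toEuclideanLin A x‖⁻¹ • (a + Matrix.toEuclideanLin A x)

open Complex

theorem affAct_eq_self_of_add_eq_smul {m : ℕ} {A : Matrix (Fin m) (Fin m) ℝ}
    {a x : EuclideanSpace ℝ (Fin m)} {L : ℝ} (hx : ‖x‖ = 1) (hL : 0 < L)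
    (h : a + Matrix.toEuclideanLin A x = L • x) : affAct A a x = x := by
  rw [affAct, h, norm_smul, hx, mul_one, Real.norm_of_nonneg hL.le, inv_smul_smul₀ hL.ne']

theorem toEuclideanLin_mulMatrix_repr (ζ z : ℂ) :
    Matrix.toEuclideanLin !![ζ.re, -ζ.im; ζ.im, ζ.re] (orthonormalBasisOneI.repr z) =
      orthonormalBasisOneI.repr (ζ * z) := by
  ext i
  fin_cases i <;> simp [orthonormalBasisOneI_repr_apply, Matrix.mulVec, dotProduct] <;> ring

theorem exists_pos_norm_ofReal_sub_eq {ζ : ℂ} (hre : 0 < ζ.re) {r : ℝ} (hr : |ζ.im| ≤ r) :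
    ∃ L : ℝ, 0 < L ∧ ‖(L : ℂ) - ζ‖ = r := by
  have hr0 : 0 ≤ r := (abs_nonneg _).trans hr
  have hsq : ζ.im ^ 2 ≤ r ^ 2 := sq_le_sq' (abs_le.mp hr).1 (abs_le.mp hr).2
  set u := √(r ^ 2 - ζ.im ^ 2)
  refine ⟨ζ.re + u, by positivity, ?_⟩
  have hu : u ^ 2 = r ^ 2 - ζ.im ^ 2 := Real.sq_sqrt (by linarith)
  rw [← sq_eq_sq₀ (norm_nonneg _) hr0, Complex.sq_norm, Complex.normSq_apply]
  simp only [sub_re, ofReal_re, sub_im, ofReal_im, add_sub_cancel_left]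
  linear_combination hu

theorem exists_norm_eq_one_add_mul_eq_ofReal_mul {z ζ : ℂ} {L : ℝ} (h : ‖(L : ℂ) - ζ‖ = ‖z‖) :
    ∃ x : ℂ, ‖x‖ = 1 ∧ z + ζ * x = L * x := by
  rcases eq_or_ne z 0 with rfl | hz
  · refine ⟨1, norm_one, ?_⟩
    rw [norm_zero, norm_eq_zero, sub_eq_zero] at h
    simp [h]
  · have hw : (L : ℂ) - ζ ≠ 0 := by rw [← norm_ne_zero_iff, h]; exact norm_ne_zero_iff.mpr hz
    refine ⟨z / (L - ζ), by rw [norm_div, h, div_self (norm_ne_zero_iff.mpr hz)], ?_⟩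
    field_simp
    ring

theorem stmt15_general (θ : ℝ) (hcos : 0 < Real.cos θ)
    (a : EuclideanSpace ℝ (Fin 2))
    (hge : |Real.sin θ| ≤ ‖a‖) :
    ∃ x : EuclideanSpace ℝ (Fin 2), ‖x‖ = 1 ∧
      affAct (!![Real.cos θ, -Real.sin θ; Real.sin θ, Real.cos θ]) a x = x := by
  let e := orthonormalBasisOneI.repr
  let ζ : ℂ := ⟨Real.cos θ, Real.sin θ⟩
  obtain ⟨L, hL, hLζ⟩ := exists_pos_norm_ofReal_sub_eq (ζ := ζ) hcos hge
  obtain ⟨z, hz, hfix⟩ := exists_norm_eq_one_add_mul_eq_ofReal_mul (z := e.symm a)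
    (by simpa using hLζ)
  refine ⟨e z, by simpa using hz, affAct_eq_self_of_add_eq_smul (L := L) (by simpa using hz) hL ?_⟩
  have := congrArg e hfix
  rwa [map_add, e.apply_symm_apply, ← toEuclideanLin_mulMatrix_repr, ← real_smul, map_smul] at this

theorem stmt15 (θ : ℝ) (hcos : 0 < Real.cos θ)
    (a : EuclideanSpace ℝ (Fin 2))
    (hge : |Real.sin θ| ≤ ‖a‖) (hlt : ‖a‖ < 1) :
    ∃ x : EuclideanSpace ℝ (Fin 2), ‖x‖ = 1 ∧
      affAct (!![Real.cos θ, -Real.sin θ; Real.sin θ, Real.cos θ]) a x = x :=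
  stmt15_general θ hcos a hge
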